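/- arXiv:2402.18839 — 3 statements merged into one kernel-verified Lean document; each statement's English description precedes it below -/
import Mathlib

section
/- Let Ξ ⊆ ℝ^{p+1} be open and let p : Ξ × ℝ^q → ℝ and u : Ξ × ℝ^q → ℝ^{q×(p+1)} be continuously differentiable and satisfy the pointwise generalized continuity equation ∇_ξ p(ξ,x) + div_x(p(ξ,x) u(ξ,x)) = 0 ∈ ℝ^{p+1} for all (ξ,x) ∈ Ξ × ℝ^q. Let γ : [0,1] → Ξ be continuously differentiable. Then the induced density p^γ(s,x) := p(γ(s),x) and the induced vector field v^γ(s,x) := u(γ(s),x) γ̇(s) ∈ ℝ^q satisfy the pointwise continuity equation ∂_s p^γ(s,x) + div_x(p^γ(s,x) v^γ(s,x)) = 0 for all s ∈ (0,1) and x ∈ ℝ^q. -/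
/-!
Along the curve the time derivative of `ρ(γ(s), x)` is, by the chain rule, the directional
derivative `∇_ξ ρ · γ̇(s)`, and the divergence of `ρ u γ̇(s)` is, by linearity, the same
combination `∑ᵢ γ̇(s)ᵢ div_x(ρ u_{·i})` of the columnwise divergences. The continuity equation is
therefore the generalized one contracted with the fixed vector `γ̇(s)`.
-/

open Set Topology Function

section Calculus

variable {𝕜 E F G : Type*} [NontriviallyNormedField 𝕜]
  [NormedAddCommGroup E] [NormedSpace 𝕜 E] [NormedAddCommGroup F] [NormedSpace 𝕜 F]
  [NormedAddCommGroup G] [NormedSpace 𝕜 G]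

theorem DifferentiableAt.curry_left {f : E → F → G} {x : E} {y : F}
    (hf : DifferentiableAt 𝕜 (uncurry f) (x, y)) : DifferentiableAt 𝕜 (fun x ↦ f x y) x :=
  DifferentiableAt.comp (f := fun x ↦ (x, y)) x hf
    (differentiableAt_id.prodMk (differentiableAt_const y))

theorem DifferentiableAt.curry_right {f : E → F → G} {x : E} {y : F}
    (hf : DifferentiableAt 𝕜 (uncurry f) (x, y)) : DifferentiableAt 𝕜 (fun y ↦ f x y) y :=
  DifferentiableAt.comp (f := fun y ↦ (x, y)) y hf
    ((differentiableAt_const x).prodMk differentiableAt_id)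

end Calculus

section Linearity

variable {ι : Type*} [Fintype ι] {E : Type*} [NormedAddCommGroup E] [NormedSpace ℝ E]

theorem ContinuousLinearMap.apply_eq_sum_pi_single [DecidableEq ι]
    (L : (ι → ℝ) →L[ℝ] E) (c : ι → ℝ) : L c = ∑ i, c i • L (Pi.single i 1) := by
  conv_lhs => rw [pi_eq_sum_univ' c]
  simp only [map_sum, map_smul]

theorem fderiv_mul_sum_mul_const_apply {g : E → ℝ} {f : ι → E → ℝ} {x : E}
    (hg : DifferentiableAt ℝ g x) (hf : ∀ i, DifferentiableAt ℝ (f i) x) (c : ι → ℝ) (v : E) :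
    fderiv ℝ (fun y ↦ g y * ∑ i, f i y * c i) x v
      = ∑ i, c i * fderiv ℝ (fun y ↦ g y * f i y) x v := by
  have hfun : (fun y ↦ g y * ∑ i, f i y * c i) = fun y ↦ ∑ i, c i * (g y * f i y) := by
    funext y
    rw [Finset.mul_sum]
    exact Finset.sum_congr rfl fun i _ ↦ by ring
  rw [hfun, fderiv_fun_sum fun i _ ↦ (hg.fun_mul (hf i)).const_mul (c i), sum_apply]
  refine Finset.sum_congr rfl fun i _ ↦ ?_
  rw [fderiv_const_mul (hg.fun_mul (hf i)), smul_apply, smul_eq_mul]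

end Linearity

theorem generalized_continuity_eq_apply {ι κ : Type*} [Fintype ι] [DecidableEq ι]
    [Fintype κ] [DecidableEq κ]
    (ρ : (ι → ℝ) → (κ → ℝ) → ℝ) (u : (ι → ℝ) → (κ → ℝ) → κ → ι → ℝ) {ξ : ι → ℝ} {x : κ → ℝ}
    (hρ : DifferentiableAt ℝ (ρ ξ) x) (hu : ∀ j i, DifferentiableAt ℝ (fun y ↦ u ξ y j i) x)
    (hGCE : ∀ i, fderiv ℝ (fun ξ' ↦ ρ ξ' x) ξ (Pi.single i 1)
      + ∑ j, fderiv ℝ (fun y ↦ ρ ξ y * u ξ y j i) x (Pi.single j 1) = 0)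
    (c : ι → ℝ) :
    fderiv ℝ (fun ξ' ↦ ρ ξ' x) ξ c
      + ∑ j, fderiv ℝ (fun y ↦ ρ ξ y * ∑ i, u ξ y j i * c i) x (Pi.single j 1) = 0 := by
  rw [ContinuousLinearMap.apply_eq_sum_pi_single _ c]
  simp_rw [fderiv_mul_sum_mul_const_apply hρ (hu _) c]
  rw [Finset.sum_comm, ← Finset.sum_add_distrib]
  refine Finset.sum_eq_zero fun i _ ↦ ?_
  rw [smul_eq_mul, ← Finset.mul_sum, ← mul_add, hGCE i, mul_zero]

/-- If a C¹ density `ρ` and C¹ matrix field `u` on an open set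
`Ξ ⊆ ℝ^{p+1}` satisfy the pointwise generalized continuity equation
`∇_ξ ρ(ξ,x) + div_x(ρ(ξ,x) u(ξ,x)) = 0`, then for any C¹ curve `γ : [0,1] → Ξ`,
the induced density `ρ^γ(s,x) = ρ(γ(s),x)` and induced vector field
`v^γ(s,x) = u(γ(s),x) γ̇(s)` satisfy the pointwise continuity equation on `(0,1) × ℝ^q`. -/
theorem gce_induces_ce_pointwise (p q : ℕ)
    (Ξ : Set (Fin (p + 1) → ℝ)) (hΞ : IsOpen Ξ)
    (ρ : (Fin (p + 1) → ℝ) → (Fin q → ℝ) → ℝ)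
    (u : (Fin (p + 1) → ℝ) → (Fin q → ℝ) → Fin q → Fin (p + 1) → ℝ)
    (hρ : ContDiffOn ℝ 1
      (fun z : (Fin (p + 1) → ℝ) × (Fin q → ℝ) => ρ z.1 z.2) (Ξ ×ˢ univ))
    (hu : ContDiffOn ℝ 1
      (fun z : (Fin (p + 1) → ℝ) × (Fin q → ℝ) => u z.1 z.2) (Ξ ×ˢ univ))
    -- pointwise generalized continuity equation on Ξ × ℝ^q :
    -- ∂_{ξ_i} ρ(ξ,x) + Σ_j ∂_{x_j} ( ρ(ξ,x) u(ξ,x)_{j i} ) = 0 for every component i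
    (hGCE : ∀ ξ ∈ Ξ, ∀ x : Fin q → ℝ, ∀ i : Fin (p + 1),
      fderiv ℝ (fun ξ' => ρ ξ' x) ξ (Pi.single i 1)
        + ∑ j : Fin q,
            fderiv ℝ (fun x' => ρ ξ x' * u ξ x' j i) x (Pi.single j 1) = 0)
    (γ : ℝ → Fin (p + 1) → ℝ) (hγ : ContDiffOn ℝ 1 γ (Icc 0 1))
    (hγΞ : ∀ s ∈ Icc (0 : ℝ) 1, γ s ∈ Ξ) :
    -- pointwise continuity equation for ρ^γ(s,x) = ρ(γ(s),x) and
    -- v^γ(s,x) = u(γ(s),x) γ̇(s), i.e. v^γ(s,x)_j = Σ_i u(γ(s),x)_{j i} γ̇(s)_i :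
    ∀ s ∈ Ioo (0 : ℝ) 1, ∀ x : Fin q → ℝ,
      deriv (fun s' => ρ (γ s') x) s
        + ∑ j : Fin q,
            fderiv ℝ
              (fun x' => ρ (γ s) x' * ∑ i : Fin (p + 1), u (γ s) x' j i * deriv γ s i)
              x (Pi.single j 1) = 0 := by
  intro s hs x
  have hξ : γ s ∈ Ξ := hγΞ s (Ioo_subset_Icc_self hs)
  have hnhds : Ξ ×ˢ univ ∈ 𝓝 (γ s, x) := (hΞ.prod isOpen_univ).mem_nhds ⟨hξ, trivial⟩
  have hρD : DifferentiableAt ℝ (uncurry ρ) (γ s, x) :=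
    (hρ.contDiffAt hnhds).differentiableAt one_ne_zero
  have huD : ∀ j i, DifferentiableAt ℝ (fun y ↦ u (γ s) y j i) x := fun j i ↦
    differentiableAt_pi.1 (differentiableAt_pi.1
      ((hu.contDiffAt hnhds).differentiableAt one_ne_zero).curry_right j) i
  have hγD : DifferentiableAt ℝ γ s :=
    (hγ.contDiffAt (Icc_mem_nhds hs.1 hs.2)).differentiableAt one_ne_zero
  have hchain : HasDerivAt (fun t ↦ ρ (γ t) x)
      (fderiv ℝ (fun ξ' ↦ ρ ξ' x) (γ s) (deriv γ s)) s :=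
    hρD.curry_left.hasFDerivAt.comp_hasDerivAt s hγD.hasDerivAt
  rw [hchain.deriv]
  exact generalized_continuity_eq_apply ρ u hρD.curry_right huD (hGCE _ hξ x) _
end

section
/- Let Ξ ⊆ ℝ^{p+1} be open, let p : Ξ × ℝ^q → ℝ be continuously differentiable and nonnegative with x ↦ p(ξ,x) Lebesgue-integrable for each ξ, let u : Ξ × ℝ^q → ℝ^{q×(p+1)} be continuously differentiable and bounded, and assume the pointwise generalized continuity equation ∇_ξ p(ξ,x) + div_x(p(ξ,x) u(ξ,x)) = 0 holds for all (ξ,x) ∈ Ξ × ℝ^q. Let γ : [0,1] → Ξ be continuously differentiable, and set p^γ(s,x) := p(γ(s),x) and v^γ(s,x) := u(γ(s),x) γ̇(s). Then for every smooth compactly supported test function ζ ∈ C_c^∞((0,1) × ℝ^q; ℝ), one has ∫_0^1 ∫_{ℝ^q} ( ∂_s ζ(s,x) + ⟨∇_x ζ(s,x), v^γ(s,x)⟩ ) p^γ(s,x) dx ds = 0, i.e. the pair (p^γ, v^γ) solves the continuity equation in the sense of distributions. -/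
open MeasureTheory Set

theorem clm_pi_expand {n : ℕ} (L : (Fin n → ℝ) →L[ℝ] ℝ) (c : Fin n → ℝ) :
    L c = ∑ i, c i * L (Pi.single i 1) := by
  conv_lhs => rw [← Finset.univ_sum_single c]
  rw [map_sum]
  refine Finset.sum_congr rfl fun i _ => ?_
  have h : Pi.single i (c i) = c i • (Pi.single i 1 : Fin n → ℝ) := by
    funext j
    by_cases hj : j = i <;> simp [Pi.single_apply, hj]
  rw [h, ContinuousLinearMap.map_smul, smul_eq_mul]

theorem div_int_zero {n : ℕ} (w : (Fin n → ℝ) → (Fin n → ℝ))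
    (hw : ContDiff ℝ 1 w) (hcs : HasCompactSupport w) :
    ∫ x : Fin n → ℝ, ∑ j, fderiv ℝ w x (Pi.single j 1) j = 0 := by
  have hfz : ∀ x ∉ tsupport w, fderiv ℝ w x = 0 := by
    intro x hx
    have h0 : w =ᶠ[nhds x] 0 := notMem_tsupport_iff_eventuallyEq.mp hx
    rw [h0.fderiv_eq]
    exact fderiv_const_apply 0
  cases n with
  | zero => simp
  | succ m =>
    obtain ⟨R₀, hR₀⟩ := hcs.isBounded.subset_closedBall 0
    set R : ℝ := max R₀ 0 with hRdef
    have hRnn : (0:ℝ) ≤ R := le_max_right _ _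
    have hsupp : ∀ x ∈ tsupport w, ∀ i, |x i| ≤ R := by
      intro x hx i
      have := hR₀ hx
      simp only [Metric.mem_closedBall, dist_zero_right] at this
      calc |x i| = ‖x i‖ := rfl
        _ ≤ ‖x‖ := norm_le_pi_norm x i
        _ ≤ R₀ := this
        _ ≤ R := le_max_left _ _
    set a : Fin (m+1) → ℝ := fun _ => -(R+1)
    set b : Fin (m+1) → ℝ := fun _ => (R+1)
    have hle : a ≤ b := fun i => by
      simp only [a, b]; linarith
    have hdiv0 : ∀ x ∉ tsupport w, (∑ j, fderiv ℝ w x (Pi.single j 1) j) = 0 := by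
      intro x hx; rw [hfz x hx]; simp
    have hIcc : tsupport w ⊆ Icc a b := by
      intro x hx
      refine ⟨fun i => ?_, fun i => ?_⟩ <;>
        · have := hsupp x hx i
          simp only [a, b]
          cases abs_le.mp this; linarith
    have hcont : Continuous fun x => ∑ j, fderiv ℝ w x (Pi.single j 1) j := by
      apply continuous_finset_sum
      intro j _
      exact (continuous_pi_iff.mp
        ((hw.continuous_fderiv one_ne_zero).clm_apply continuous_const)) j
    have key := integral_divergence_of_hasFDerivAt_off_countable (a := a) (b := b) hle w
      (fun x => fderiv ℝ w x) ∅ countable_empty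
      (hw.continuous.continuousOn)
      (fun x hx => (hw.differentiable one_ne_zero x).hasFDerivAt)
      (hcont.continuousOn.integrableOn_compact isCompact_Icc)
    have hface : ∀ (i : Fin (m+1)) (c : ℝ), |c| = R + 1 →
        ∀ y : Fin m → ℝ, w (i.insertNth c y) i = 0 := by
      intro i c hc y
      have : i.insertNth c y ∉ tsupport w := by
        intro hmem
        have := hsupp _ hmem i
        rw [Fin.insertNth_apply_same] at this
        rw [hc] at this; linarith
      exact congrFun (image_eq_zero_of_notMem_tsupport this) i
    rw [setIntegral_eq_integral_of_forall_compl_eq_zero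
      (fun x hx => hdiv0 x (fun h => hx (hIcc h)))] at key
    rw [key]
    apply Finset.sum_eq_zero
    intro i _
    have h1 : ∀ y : Fin m → ℝ, w (i.insertNth (b i) y) i = 0 :=
      hface i (b i) (by simp [b]; linarith)
    have h2 : ∀ y : Fin m → ℝ, w (i.insertNth (a i) y) i = 0 :=
      hface i (a i) (by simp [a]; rw [abs_of_nonpos] <;> linarith)
    simp [h1, h2]

/-- If a C¹ nonnegative integrable density `ρ` and a bounded C¹ matrix
field `u` on an open `Ξ ⊆ ℝ^{p+1}` satisfy the pointwise generalized continuity equation,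
then for any C¹ curve `γ : [0,1] → Ξ` the pair `(ρ^γ, v^γ)` with
`ρ^γ(s,x) = ρ(γ(s),x)` and `v^γ(s,x) = u(γ(s),x) γ̇(s)` solves the continuity equation
in the sense of distributions: for every `ζ ∈ C_c^∞((0,1) × ℝ^q)`,
`∫∫ (∂_s ζ + ⟨∇_x ζ, v^γ⟩) ρ^γ dx ds = 0`. -/
theorem gce_induces_ce_distributional (p q : ℕ)
    (Ξ : Set (Fin (p + 1) → ℝ)) (hΞ : IsOpen Ξ)
    (ρ : (Fin (p + 1) → ℝ) → (Fin q → ℝ) → ℝ)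
    (u : (Fin (p + 1) → ℝ) → (Fin q → ℝ) → Fin q → Fin (p + 1) → ℝ)
    (hρ : ContDiffOn ℝ 1
      (fun z : (Fin (p + 1) → ℝ) × (Fin q → ℝ) => ρ z.1 z.2) (Ξ ×ˢ univ))
    (hρpos : ∀ ξ ∈ Ξ, ∀ x : Fin q → ℝ, 0 ≤ ρ ξ x)
    (hρint : ∀ ξ ∈ Ξ, Integrable (fun x : Fin q → ℝ => ρ ξ x))
    (hu : ContDiffOn ℝ 1
      (fun z : (Fin (p + 1) → ℝ) × (Fin q → ℝ) => u z.1 z.2) (Ξ ×ˢ univ))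
    (hubdd : ∃ C : ℝ, ∀ ξ ∈ Ξ, ∀ x : Fin q → ℝ, ∀ j : Fin q, ∀ i : Fin (p + 1),
      |u ξ x j i| ≤ C)
    -- pointwise generalized continuity equation on Ξ × ℝ^q
    (hGCE : ∀ ξ ∈ Ξ, ∀ x : Fin q → ℝ, ∀ i : Fin (p + 1),
      fderiv ℝ (fun ξ' => ρ ξ' x) ξ (Pi.single i 1)
        + ∑ j : Fin q,
            fderiv ℝ (fun x' => ρ ξ x' * u ξ x' j i) x (Pi.single j 1) = 0)
    (γ : ℝ → Fin (p + 1) → ℝ) (hγ : ContDiffOn ℝ 1 γ (Icc 0 1))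
    (hγΞ : ∀ s ∈ Icc (0 : ℝ) 1, γ s ∈ Ξ) :
    -- distributional continuity equation for ρ^γ(s,x) = ρ(γ(s),x) and
    -- v^γ(s,x)_j = Σ_i u(γ(s),x)_{j i} γ̇(s)_i
    ∀ ζ : ℝ × (Fin q → ℝ) → ℝ,
      ContDiff ℝ (⊤ : ℕ∞) ζ → HasCompactSupport ζ →
      tsupport ζ ⊆ Ioo (0 : ℝ) 1 ×ˢ univ →
      ∫ s in Ioo (0 : ℝ) 1, ∫ x : Fin q → ℝ,
        (fderiv ℝ ζ (s, x) (1, 0)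
          + fderiv ℝ ζ (s, x)
              (0, fun j => ∑ i : Fin (p + 1), u (γ s) x j i * deriv γ s i))
        * ρ (γ s) x = 0 := by
  intro ζ hζ hζcs hζsupp
  have hone : (1 : WithTop ℕ∞) ≤ ((⊤:ℕ∞) : WithTop ℕ∞) := by exact_mod_cast le_top
  set P : (Fin (p + 1) → ℝ) × (Fin q → ℝ) → ℝ := fun z => ρ z.1 z.2 with hPdef
  set H : ℝ × (Fin q → ℝ) → ℝ := fun z =>
    fderiv ℝ ζ z (1, 0) * ρ (γ z.1) z.2
      + ζ z * fderiv ℝ P (γ z.1, z.2) (deriv γ z.1, 0) with hHdef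
  set g : ℝ × (Fin q → ℝ) → ℝ := fun z => ζ z * ρ (γ z.1) z.2 with hgdef
  have hopen : IsOpen (Ξ ×ˢ (univ : Set (Fin q → ℝ))) := hΞ.prod isOpen_univ
  have hγIoo : ∀ s ∈ Ioo (0:ℝ) 1, γ s ∈ Ξ :=
    fun s hs => hγΞ s (Ioo_subset_Icc_self hs)
  have hζd : Differentiable ℝ ζ := hζ.differentiable (by simp)
  have hζfC : Continuous (fderiv ℝ ζ) := hζ.continuous_fderiv (by simp)
  have hζ0 : ∀ z ∉ tsupport ζ, ζ z = 0 := fun z hz => image_eq_zero_of_notMem_tsupport hz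
  have hζf0 : ∀ z ∉ tsupport ζ, fderiv ℝ ζ z = 0 := by
    intro z hz
    rw [(notMem_tsupport_iff_eventuallyEq.mp hz).fderiv_eq]
    exact fderiv_const_apply 0
  have hnot : ∀ z : ℝ × (Fin q → ℝ), z.1 ∉ Ioo (0:ℝ) 1 → z ∉ tsupport ζ :=
    fun z hz hmem => hz (hζsupp hmem).1
  have hPdiff : ∀ z ∈ Ξ ×ˢ (univ : Set (Fin q → ℝ)), HasFDerivAt P (fderiv ℝ P z) z :=
    fun z hz => ((hρ.differentiableOn one_ne_zero z hz).differentiableAt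
      (hopen.mem_nhds hz)).hasFDerivAt
  have hPc : ContinuousOn P (Ξ ×ˢ univ) := hρ.continuousOn
  have hPfc : ContinuousOn (fderiv ℝ P) (Ξ ×ˢ univ) :=
    hρ.continuousOn_fderiv_of_isOpen hopen le_rfl
  have hγd : ∀ s ∈ Ioo (0:ℝ) 1, HasDerivAt γ (deriv γ s) s := by
    intro s hs
    exact ((hγ.differentiableOn one_ne_zero s (Ioo_subset_Icc_self hs)).differentiableAt
      (Icc_mem_nhds hs.1 hs.2)).hasDerivAt
  have hγc : ContinuousOn γ (Ioo 0 1) := hγ.continuousOn.mono Ioo_subset_Icc_self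
  have hγdc : ContinuousOn (deriv γ) (Ioo 0 1) := by
    have hD : ContinuousOn (derivWithin γ (Icc 0 1)) (Icc 0 1) :=
      hγ.continuousOn_derivWithin (uniqueDiffOn_Icc zero_lt_one) le_rfl
    exact (hD.mono Ioo_subset_Icc_self).congr
      (fun s hs => (derivWithin_of_mem_nhds (Icc_mem_nhds hs.1 hs.2)).symm)
  -- the modified curve map
  have hmapc : ContinuousOn (fun z : ℝ × (Fin q → ℝ) => (γ z.1, z.2))
      (Ioo (0:ℝ) 1 ×ˢ univ) := by
    exact (hγc.comp continuous_fst.continuousOn (fun z hz => hz.1)).prodMk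
      continuous_snd.continuousOn
  have hmaps : MapsTo (fun z : ℝ × (Fin q → ℝ) => (γ z.1, z.2))
      (Ioo (0:ℝ) 1 ×ˢ univ) (Ξ ×ˢ univ) :=
    fun z hz => ⟨hγIoo _ hz.1, mem_univ _⟩
  have hUopen : IsOpen (Ioo (0:ℝ) 1 ×ˢ (univ : Set (Fin q → ℝ))) :=
    isOpen_Ioo.prod isOpen_univ
  -- H vanishes off the support of ζ
  have hH0 : ∀ z ∉ tsupport ζ, H z = 0 := by
    intro z hz
    rw [hHdef]
    simp only [hζ0 z hz, hζf0 z hz]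
    simp
  have hg0 : ∀ z ∉ tsupport ζ, g z = 0 := by
    intro z hz
    rw [hgdef]
    simp only [hζ0 z hz]
    simp
  -- joint continuity of H and g
  have hHcont : Continuous H := by
    rw [continuous_iff_continuousAt]
    intro z
    by_cases hz : z ∈ Ioo (0:ℝ) 1 ×ˢ (univ : Set (Fin q → ℝ))
    · have h1 : ContinuousOn H (Ioo (0:ℝ) 1 ×ˢ univ) := by
        rw [hHdef]
        apply ContinuousOn.add
        · exact ((hζfC.clm_apply continuous_const).continuousOn).mul
            (hPc.comp hmapc hmaps)
        · exact hζ.continuous.continuousOn.mul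
            (((hPfc.comp hmapc hmaps)).clm_apply
              ((hγdc.comp continuous_fst.continuousOn (fun z hz => hz.1)).prodMk
                continuousOn_const))
      exact h1.continuousAt (hUopen.mem_nhds hz)
    · have hz' : z ∉ tsupport ζ := fun hmem => hz (hζsupp hmem)
      have : H =ᶠ[nhds z] fun _ => 0 := by
        filter_upwards [(isClosed_tsupport ζ).isOpen_compl.mem_nhds hz'] with z' hz''
        exact hH0 z' hz''
      exact this.continuousAt
  have hgcont : Continuous g := by
    rw [continuous_iff_continuousAt]
    intro z
    by_cases hz : z ∈ Ioo (0:ℝ) 1 ×ˢ (univ : Set (Fin q → ℝ))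
    · have h1 : ContinuousOn g (Ioo (0:ℝ) 1 ×ˢ univ) := by
        rw [hgdef]
        exact hζ.continuous.continuousOn.mul (hPc.comp hmapc hmaps)
      exact h1.continuousAt (hUopen.mem_nhds hz)
    · have hz' : z ∉ tsupport ζ := fun hmem => hz (hζsupp hmem)
      have : g =ᶠ[nhds z] fun _ => 0 := by
        filter_upwards [(isClosed_tsupport ζ).isOpen_compl.mem_nhds hz'] with z' hz''
        exact hg0 z' hz''
      exact this.continuousAt
  have hHsupp : HasCompactSupport H :=
    HasCompactSupport.intro hζcs hH0
  have hK1 : IsCompact (Prod.fst '' tsupport ζ) := hζcs.image continuous_fst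
  have hK2 : IsCompact (Prod.snd '' tsupport ζ) := hζcs.image continuous_snd
  -- per-x fundamental theorem of calculus
  have hder : ∀ (x : Fin q → ℝ) (s : ℝ), HasDerivAt (fun s' => g (s', x)) (H (s, x)) s := by
    intro x s
    by_cases hs : s ∈ Ioo (0:ℝ) 1
    · have h1 : HasDerivAt (fun s' => ζ (s', x)) (fderiv ℝ ζ (s, x) (1, 0)) s := by
        have hc : HasDerivAt (fun s' : ℝ => (s', x)) ((1:ℝ), (0 : Fin q → ℝ)) s :=
          (hasDerivAt_id s).prodMk (hasDerivAt_const s x)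
        exact HasFDerivAt.comp_hasDerivAt (f := fun s' : ℝ => (s', x)) (x := s)
          (hζd (s, x)).hasFDerivAt hc
      have h2 : HasDerivAt (fun s' => ρ (γ s') x)
          (fderiv ℝ P (γ s, x) (deriv γ s, 0)) s := by
        have hPz : HasFDerivAt P (fderiv ℝ P (γ s, x)) (γ s, x) :=
          hPdiff (γ s, x) ⟨hγIoo s hs, mem_univ _⟩
        have hcurve : HasDerivAt (fun s' => (γ s', x)) (deriv γ s, (0 : Fin q → ℝ)) s :=
          (hγd s hs).prodMk (hasDerivAt_const s x)
        exact HasFDerivAt.comp_hasDerivAt (f := fun s' : ℝ => (γ s', x)) (x := s)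
          hPz hcurve
      exact h1.mul h2
    · have hzs : (s, x) ∉ tsupport ζ := hnot (s, x) hs
      have hH0' : H (s, x) = 0 := hH0 _ hzs
      rw [hH0']
      have hev : ∀ᶠ s' in nhds s, (s', x) ∉ tsupport ζ := by
        have hc : ContinuousAt (fun s' : ℝ => (s', x)) s :=
          (continuous_id.prodMk continuous_const).continuousAt
        exact hc.eventually_mem ((isClosed_tsupport ζ).isOpen_compl.mem_nhds hzs)
      have heq : (fun s' => g (s', x)) =ᶠ[nhds s] fun _ => (0:ℝ) := by
        filter_upwards [hev] with s' h
        exact hg0 _ h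
      exact (hasDerivAt_const s (0:ℝ)).congr_of_eventuallyEq heq
  -- slice integrability
  have hgint : ∀ x : Fin q → ℝ, Integrable (fun s => g (s, x)) := by
    intro x
    refine (hgcont.comp (continuous_id.prodMk continuous_const)).integrable_of_hasCompactSupport
      (HasCompactSupport.intro hK1 ?_)
    intro s hsx
    exact hg0 _ (fun hmem => hsx ⟨(s, x), hmem, rfl⟩)
  have hHxint : ∀ x : Fin q → ℝ, Integrable (fun s => H (s, x)) := by
    intro x
    refine (hHcont.comp (continuous_id.prodMk continuous_const)).integrable_of_hasCompactSupport
      (HasCompactSupport.intro hK1 ?_)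
    intro s hsx
    exact hH0 _ (fun hmem => hsx ⟨(s, x), hmem, rfl⟩)
  have hzero : ∀ x : Fin q → ℝ, ∫ s : ℝ, H (s, x) = 0 := fun x =>
    integral_eq_zero_of_hasDerivAt_of_integrable (hder x) (hHxint x) (hgint x)
  -- Fubini
  have hHint : Integrable H := hHcont.integrable_of_hasCompactSupport hHsupp
  have hswap : ∫ s : ℝ, ∫ x : Fin q → ℝ, H (s, x) = ∫ x : Fin q → ℝ, ∫ s : ℝ, H (s, x) := by
    apply integral_integral_swap
    have : Function.uncurry (fun s x => H (s, x)) = H := by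
      funext z; simp [Function.uncurry]
    rw [this, ← Measure.volume_eq_prod]
    exact hHint
  -- the key pointwise-in-s identity
  have key : ∀ s ∈ Ioo (0:ℝ) 1,
      (∫ x : Fin q → ℝ,
        (fderiv ℝ ζ (s, x) (1, 0)
          + fderiv ℝ ζ (s, x)
              (0, fun j => ∑ i : Fin (p + 1), u (γ s) x j i * deriv γ s i))
        * ρ (γ s) x) = ∫ x : Fin q → ℝ, H (s, x) := by
    intro s hs
    have hξ : γ s ∈ Ξ := hγIoo s hs
    -- slice regularity
    have hρx : ContDiff ℝ 1 (fun x => ρ (γ s) x) := by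
      have h := hρ.comp ((contDiff_const.prodMk contDiff_id).contDiffOn :
          ContDiffOn ℝ 1 (fun x : Fin q → ℝ => ((γ s), x)) univ)
        (fun x _ => ⟨hξ, mem_univ _⟩)
      rw [contDiffOn_univ] at h
      exact h
    have hux : ContDiff ℝ 1 (fun x => u (γ s) x) := by
      have h := hu.comp ((contDiff_const.prodMk contDiff_id).contDiffOn :
          ContDiffOn ℝ 1 (fun x : Fin q → ℝ => ((γ s), x)) univ)
        (fun x _ => ⟨hξ, mem_univ _⟩)
      rw [contDiffOn_univ] at h
      exact h
    have huxji : ∀ (j : Fin q) (i : Fin (p+1)), ContDiff ℝ 1 (fun x => u (γ s) x j i) :=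
      fun j i => contDiff_pi.mp (contDiff_pi.mp hux j) i
    have hζsx : ContDiff ℝ (⊤:ℕ∞) (fun x => ζ (s, x)) :=
      hζ.comp (contDiff_const.prodMk contDiff_id)
    -- vector field
    set w : (Fin q → ℝ) → (Fin q → ℝ) :=
      fun x j => ζ (s, x) * ∑ i, (ρ (γ s) x * u (γ s) x j i) * deriv γ s i with hwdef
    have hwC : ContDiff ℝ 1 w := by
      rw [hwdef]
      exact contDiff_pi.mpr fun j => (hζsx.of_le hone).mul
        (ContDiff.sum fun i _ => (hρx.mul (huxji j i)).mul contDiff_const)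
    have hwcs : HasCompactSupport w := by
      refine HasCompactSupport.intro hK2 ?_
      intro x hx
      have h0 : ζ (s, x) = 0 := hζ0 _ (fun hmem => hx ⟨(s, x), hmem, rfl⟩)
      funext j
      rw [hwdef]
      simp [h0]
    have hdiv := div_int_zero w hwC hwcs
    -- pointwise divergence identity
    have hpoint : ∀ x : Fin q → ℝ, (∑ j, fderiv ℝ w x (Pi.single j 1) j) =
        fderiv ℝ ζ (s, x) (0, fun j => ∑ i, u (γ s) x j i * deriv γ s i)
            * ρ (γ s) x
          - ζ (s, x) * fderiv ℝ P (γ s, x) (deriv γ s, 0) := by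
      intro x
      have hζx : HasFDerivAt (fun x' => ζ (s, x'))
          ((fderiv ℝ ζ (s, x)).comp (ContinuousLinearMap.inr ℝ ℝ (Fin q → ℝ))) x :=
        (hζd (s, x)).hasFDerivAt.comp x (hasFDerivAt_prodMk_right s x)
      have hρu : ∀ (j : Fin q) (i : Fin (p+1)),
          HasFDerivAt (fun x' => ρ (γ s) x' * u (γ s) x' j i)
            (fderiv ℝ (fun x' => ρ (γ s) x' * u (γ s) x' j i) x) x :=
        fun j i => (((hρx.mul (huxji j i)).differentiable one_ne_zero) x).hasFDerivAt
      have hDcomp : ∀ j : Fin q, HasFDerivAt (fun x' => w x' j)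
          (ζ (s, x) • (∑ i, deriv γ s i •
              fderiv ℝ (fun x' => ρ (γ s) x' * u (γ s) x' j i) x)
            + (∑ i, (ρ (γ s) x * u (γ s) x j i) * deriv γ s i) •
                ((fderiv ℝ ζ (s, x)).comp
                  (ContinuousLinearMap.inr ℝ ℝ (Fin q → ℝ)))) x := by
        intro j
        have hsum : HasFDerivAt
            (fun x' => ∑ i, (ρ (γ s) x' * u (γ s) x' j i) * deriv γ s i)
            (∑ i, deriv γ s i •
              fderiv ℝ (fun x' => ρ (γ s) x' * u (γ s) x' j i) x) x :=
          HasFDerivAt.fun_sum (fun i _ => (hρu j i).mul_const (deriv γ s i))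
        exact hζx.mul hsum
      have hwD : HasFDerivAt w (ContinuousLinearMap.pi (fun j =>
          ζ (s, x) • (∑ i, deriv γ s i •
              fderiv ℝ (fun x' => ρ (γ s) x' * u (γ s) x' j i) x)
            + (∑ i, (ρ (γ s) x * u (γ s) x j i) * deriv γ s i) •
                ((fderiv ℝ ζ (s, x)).comp
                  (ContinuousLinearMap.inr ℝ ℝ (Fin q → ℝ))))) x :=
        hasFDerivAt_pi.mpr hDcomp
      rw [hwD.fderiv]
      have hLHS : ∀ j : Fin q, (ContinuousLinearMap.pi (fun j =>
          ζ (s, x) • (∑ i, deriv γ s i •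
              fderiv ℝ (fun x' => ρ (γ s) x' * u (γ s) x' j i) x)
            + (∑ i, (ρ (γ s) x * u (γ s) x j i) * deriv γ s i) •
                ((fderiv ℝ ζ (s, x)).comp
                  (ContinuousLinearMap.inr ℝ ℝ (Fin q → ℝ)))))
            (Pi.single j 1) j
          = ζ (s, x) * (∑ i, deriv γ s i *
              fderiv ℝ (fun x' => ρ (γ s) x' * u (γ s) x' j i) x (Pi.single j 1))
            + (∑ i, (ρ (γ s) x * u (γ s) x j i) * deriv γ s i) *
                fderiv ℝ ζ (s, x) (0, Pi.single j 1) := by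
        intro j
        simp [ContinuousLinearMap.pi_apply, ContinuousLinearMap.add_apply,
          ContinuousLinearMap.smul_apply, ContinuousLinearMap.coe_sum',
          Finset.sum_apply, smul_eq_mul, ContinuousLinearMap.comp_apply,
          ContinuousLinearMap.inr_apply]
      rw [Finset.sum_congr rfl (fun j _ => hLHS j), Finset.sum_add_distrib]
      -- partial derivative of ρ in ξ
      have hpart : fderiv ℝ (fun ξ' => ρ ξ' x) (γ s)
          = (fderiv ℝ P (γ s, x)).comp
              (ContinuousLinearMap.inl ℝ (Fin (p+1) → ℝ) (Fin q → ℝ)) :=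
        by have h := ((hPdiff (γ s, x) ⟨hξ, mem_univ _⟩).comp (γ s) (f := fun e => (e, x))
          (hasFDerivAt_prodMk_left (𝕜 := ℝ) (γ s) x)).fderiv; exact h
      have hexp1 : fderiv ℝ P (γ s, x) (deriv γ s, 0)
          = ∑ i, deriv γ s i * fderiv ℝ (fun ξ' => ρ ξ' x) (γ s) (Pi.single i 1) := by
        rw [hpart]
        have := clm_pi_expand ((fderiv ℝ P (γ s, x)).comp
          (ContinuousLinearMap.inl ℝ (Fin (p+1) → ℝ) (Fin q → ℝ))) (deriv γ s)
        simpa [ContinuousLinearMap.comp_apply, ContinuousLinearMap.inl_apply] using this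
      have hexp2 : fderiv ℝ ζ (s, x) (0, fun j => ∑ i, u (γ s) x j i * deriv γ s i)
          = ∑ j, (∑ i, u (γ s) x j i * deriv γ s i) *
              fderiv ℝ ζ (s, x) (0, Pi.single j 1) := by
        have := clm_pi_expand ((fderiv ℝ ζ (s, x)).comp
          (ContinuousLinearMap.inr ℝ ℝ (Fin q → ℝ)))
          (fun j => ∑ i, u (γ s) x j i * deriv γ s i)
        simpa [ContinuousLinearMap.comp_apply, ContinuousLinearMap.inr_apply] using this
      have e1 : ∑ j, ζ (s, x) * (∑ i, deriv γ s i *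
            fderiv ℝ (fun x' => ρ (γ s) x' * u (γ s) x' j i) x (Pi.single j 1))
          = -(ζ (s, x) * fderiv ℝ P (γ s, x) (deriv γ s, 0)) := by
        rw [← Finset.mul_sum, Finset.sum_comm]
        have hGCE' : ∀ i : Fin (p+1),
            ∑ j, fderiv ℝ (fun x' => ρ (γ s) x' * u (γ s) x' j i) x (Pi.single j 1)
              = -(fderiv ℝ (fun ξ' => ρ ξ' x) (γ s) (Pi.single i 1)) :=
          fun i => eq_neg_of_add_eq_zero_right (by
            have := hGCE (γ s) hξ x i
            linarith [this])
        calc ζ (s, x) * ∑ i, ∑ j, deriv γ s i *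
              fderiv ℝ (fun x' => ρ (γ s) x' * u (γ s) x' j i) x (Pi.single j 1)
            = ζ (s, x) * ∑ i, deriv γ s i *
              (∑ j, fderiv ℝ (fun x' => ρ (γ s) x' * u (γ s) x' j i) x (Pi.single j 1)) := by
              rw [Finset.sum_congr rfl (fun i _ => (Finset.mul_sum _ _ _).symm)]
          _ = ζ (s, x) * ∑ i, deriv γ s i *
              (-(fderiv ℝ (fun ξ' => ρ ξ' x) (γ s) (Pi.single i 1))) := by
              rw [Finset.sum_congr rfl (fun i _ => by rw [hGCE' i])]
          _ = -(ζ (s, x) * ∑ i, deriv γ s i *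
              fderiv ℝ (fun ξ' => ρ ξ' x) (γ s) (Pi.single i 1)) := by
              simp only [mul_neg]
              rw [Finset.sum_neg_distrib, mul_neg]
          _ = -(ζ (s, x) * fderiv ℝ P (γ s, x) (deriv γ s, 0)) := by rw [← hexp1]
      have e2 : ∑ j, (∑ i, (ρ (γ s) x * u (γ s) x j i) * deriv γ s i) *
            fderiv ℝ ζ (s, x) (0, Pi.single j 1)
          = fderiv ℝ ζ (s, x) (0, fun j => ∑ i, u (γ s) x j i * deriv γ s i)
              * ρ (γ s) x := by
        calc ∑ j, (∑ i, (ρ (γ s) x * u (γ s) x j i) * deriv γ s i) *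
              fderiv ℝ ζ (s, x) (0, Pi.single j 1)
            = ∑ j, (∑ i, u (γ s) x j i * deriv γ s i) *
                fderiv ℝ ζ (s, x) (0, Pi.single j 1) * ρ (γ s) x := by
              refine Finset.sum_congr rfl fun j _ => ?_
              rw [show (∑ i, (ρ (γ s) x * u (γ s) x j i) * deriv γ s i)
                  = ρ (γ s) x * ∑ i, u (γ s) x j i * deriv γ s i from by
                rw [Finset.mul_sum]
                exact Finset.sum_congr rfl fun i _ => by ring]
              ring
          _ = (∑ j, (∑ i, u (γ s) x j i * deriv γ s i) *
                fderiv ℝ ζ (s, x) (0, Pi.single j 1)) * ρ (γ s) x := by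
              rw [Finset.sum_mul]
          _ = fderiv ℝ ζ (s, x) (0, fun j => ∑ i, u (γ s) x j i * deriv γ s i)
                * ρ (γ s) x := by rw [← hexp2]
      rw [e1, e2]
      ring
    -- rewrite the divergence integral
    have hfun : (fun x : Fin q → ℝ => ∑ j, fderiv ℝ w x (Pi.single j 1) j)
        = fun x => fderiv ℝ ζ (s, x)
              (0, fun j => ∑ i, u (γ s) x j i * deriv γ s i) * ρ (γ s) x
          - ζ (s, x) * fderiv ℝ P (γ s, x) (deriv γ s, 0) := funext hpoint
    rw [hfun] at hdiv
    -- integrability of the pieces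
    have hρxc : Continuous fun x => ρ (γ s) x := hρx.continuous
    have hfζc : Continuous fun x : Fin q → ℝ => fderiv ℝ ζ (s, x) :=
      hζfC.comp (continuous_const.prodMk continuous_id)
    have hfPc2 : Continuous fun x : Fin q → ℝ => fderiv ℝ P (γ s, x) :=
      hPfc.comp_continuous (continuous_const.prodMk continuous_id)
        (fun x => ⟨hξ, mem_univ _⟩)
    have hvc : Continuous fun x : Fin q → ℝ =>
        (fun j => ∑ i, u (γ s) x j i * deriv γ s i) :=
      continuous_pi fun j => continuous_finset_sum _ fun i _ =>
        ((huxji j i).continuous.mul continuous_const)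
    have hsl0 : ∀ x : Fin q → ℝ, x ∉ Prod.snd '' tsupport ζ →
        ζ (s, x) = 0 ∧ fderiv ℝ ζ (s, x) = 0 := by
      intro x hx
      have hmem : (s, x) ∉ tsupport ζ := fun hmem => hx ⟨(s, x), hmem, rfl⟩
      exact ⟨hζ0 _ hmem, hζf0 _ hmem⟩
    have hT1int : Integrable (fun x : Fin q → ℝ =>
        fderiv ℝ ζ (s, x) (0, fun j => ∑ i, u (γ s) x j i * deriv γ s i)
          * ρ (γ s) x) :=
      ((hfζc.clm_apply (continuous_const.prodMk hvc)).mul hρxc).integrable_of_hasCompactSupport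
        (HasCompactSupport.intro hK2 fun x hx => by simp [(hsl0 x hx).2])
    have hT2int : Integrable (fun x : Fin q → ℝ =>
        ζ (s, x) * fderiv ℝ P (γ s, x) (deriv γ s, 0)) :=
      (hζsx.continuous.mul (hfPc2.clm_apply continuous_const)).integrable_of_hasCompactSupport
        (HasCompactSupport.intro hK2 fun x hx => by simp [(hsl0 x hx).1])
    have hAint : Integrable (fun x : Fin q → ℝ =>
        fderiv ℝ ζ (s, x) (1, 0) * ρ (γ s) x) :=
      ((hfζc.clm_apply continuous_const).mul hρxc).integrable_of_hasCompactSupport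
        (HasCompactSupport.intro hK2 fun x hx => by simp [(hsl0 x hx).2])
    have hT12 : (∫ x : Fin q → ℝ,
          fderiv ℝ ζ (s, x) (0, fun j => ∑ i, u (γ s) x j i * deriv γ s i)
            * ρ (γ s) x)
        = ∫ x : Fin q → ℝ, ζ (s, x) * fderiv ℝ P (γ s, x) (deriv γ s, 0) := by
      apply sub_eq_zero.mp
      rw [← integral_sub hT1int hT2int]
      exact hdiv
    have hsplit : (fun x : Fin q → ℝ =>
        (fderiv ℝ ζ (s, x) (1, 0)
          + fderiv ℝ ζ (s, x) (0, fun j => ∑ i, u (γ s) x j i * deriv γ s i))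
          * ρ (γ s) x)
        = fun x => fderiv ℝ ζ (s, x) (1, 0) * ρ (γ s) x
            + fderiv ℝ ζ (s, x) (0, fun j => ∑ i, u (γ s) x j i * deriv γ s i)
              * ρ (γ s) x := funext fun x => add_mul _ _ _
    rw [hsplit, integral_add hAint hT1int, hT12, ← integral_add hAint hT2int]

  -- assemble
  calc ∫ s in Ioo (0:ℝ) 1, ∫ x : Fin q → ℝ,
        (fderiv ℝ ζ (s, x) (1, 0)
          + fderiv ℝ ζ (s, x)
              (0, fun j => ∑ i : Fin (p + 1), u (γ s) x j i * deriv γ s i))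
        * ρ (γ s) x
      = ∫ s in Ioo (0:ℝ) 1, ∫ x : Fin q → ℝ, H (s, x) := by
        apply setIntegral_congr_fun measurableSet_Ioo
        intro s hs
        exact key s hs
    _ = ∫ s : ℝ, ∫ x : Fin q → ℝ, H (s, x) := by
        apply setIntegral_eq_integral_of_forall_compl_eq_zero
        intro s hs
        have : ∀ x : Fin q → ℝ, H (s, x) = 0 := fun x => hH0 _ (hnot (s, x) hs)
        simp [this]
    _ = ∫ x : Fin q → ℝ, ∫ s : ℝ, H (s, x) := hswap
    _ = 0 := by simp [hzero]
end

section
/- Let Ξ ⊆ ℝ^{p+1} be a bounded open set and (S, 𝔖, P) a probability space. Let ψ : S × Ξ → ℝ^q be a jointly measurable random field such that for P-a.e. ω the map ξ ↦ ψ(ω,ξ) is continuously differentiable with Jacobian ∇_ξ ψ(ω,ξ) ∈ ℝ^{q×(p+1)}, and assume ∫_S ∫_Ξ ‖∇_ξ ψ(ω,ξ)‖² dξ dP(ω) < +∞. Then for every smooth compactly supported test function φ ∈ C_c^∞(Ξ × ℝ^q; ℝ^{p+1}): ∫_S ∫_Ξ ( div_ξ φ(ξ, ψ(ω,ξ)) +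 ⟨∇_x φ(ξ, ψ(ω,ξ)), ∇_ξ ψ(ω,ξ)⟩_F ) dξ dP(ω) = 0. Equivalently, the mixture μ^Q_ξ := law of ψ(·,ξ), paired with the superposed matrix field given by the conditional expectation of ∇_ξψ(ξ) given ψ(ξ), is a distributional solution of the generalized continuity equation. -/
/-!
For fixed `ω`, the field `F ξ = φ (ξ, ψ ω ξ)` is `C¹` with compact support inside `Ξ`: outside `Ξ`
it vanishes near every point, so the behaviour of `ψ ω` there is irrelevant. By the chain rule the
integrand is `div F`, and the integral of the divergence of a compactly supported `C¹` field
vanishes (integrate each `∂ᵢ Fᵢ` by parts against the constant `1`). Hence the inner integral is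
zero for a.e. `ω`.
-/

open MeasureTheory Set

/-- The Jacobian matrix `Dψ(ξ) ∈ ℝ^{q×(p+1)}` of a map `ψ : ℝ^{p+1} → ℝ^q`,
with entries `(Dψ(ξ))_{j i} = ∂_{ξ^i} ψ^j(ξ)`. -/
noncomputable def jac (p q : ℕ) (ψ : (Fin (p + 1) → ℝ) → Fin q → ℝ)
    (ξ : Fin (p + 1) → ℝ) : Fin q → Fin (p + 1) → ℝ :=
  fun j i => fderiv ℝ ψ ξ (Pi.single i 1) j

theorem ContDiffOn.contDiff_of_tsupport_subset {𝕜 E F : Type*} [NontriviallyNormedField 𝕜]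
    [NormedAddCommGroup E] [NormedSpace 𝕜 E] [NormedAddCommGroup F] [NormedSpace 𝕜 F]
    {n : WithTop ℕ∞} {f : E → F} {U : Set E} (hf : ContDiffOn 𝕜 n f U) (hU : IsOpen U)
    (hfU : tsupport f ⊆ U) : ContDiff 𝕜 n f :=
  contDiff_iff_contDiffAt.2 fun x => by
    by_cases hx : x ∈ U
    · exact hf.contDiffAt (hU.mem_nhds hx)
    · exact contDiffAt_const.congr_of_eventuallyEq
        (notMem_tsupport_iff_eventuallyEq.1 fun h => hx (hfU h))

section Support

variable {X Y M : Type*} [TopologicalSpace X] [T2Space X] [TopologicalSpace Y] [Zero M]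

theorem HasCompactSupport.tsupport_comp_graph_subset {φ : X × Y → M}
    (hφ : HasCompactSupport φ) (ψ : X → Y) :
    tsupport (fun x => φ (x, ψ x)) ⊆ Prod.fst '' tsupport φ :=
  closure_minimal (fun x hx => ⟨(x, ψ x), subset_tsupport _ hx, rfl⟩)
    (hφ.isCompact.image continuous_fst).isClosed

theorem HasCompactSupport.comp_graph {φ : X × Y → M} (hφ : HasCompactSupport φ) (ψ : X → Y) :
    HasCompactSupport (fun x => φ (x, ψ x)) :=
  (hφ.isCompact.image continuous_fst).of_isClosed_subset (isClosed_tsupport _)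
    (hφ.tsupport_comp_graph_subset ψ)

end Support

section Calculus

variable {E F G : Type*} [NormedAddCommGroup E] [NormedSpace ℝ E]
  [NormedAddCommGroup F] [NormedSpace ℝ F] [NormedAddCommGroup G] [NormedSpace ℝ G]

theorem fderiv_comp_graph_apply {φ : E × F → G} {ψ : E → F} {x : E}
    (hφ : DifferentiableAt ℝ φ (x, ψ x)) (hψ : DifferentiableAt ℝ ψ x) (v : E) :
    fderiv ℝ (fun y => φ (y, ψ y)) x v = fderiv ℝ φ (x, ψ x) (v, fderiv ℝ ψ x v) := by
  have hcomp : HasFDerivAt (fun y => φ (y, ψ y))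
      ((fderiv ℝ φ (x, ψ x)).comp ((ContinuousLinearMap.id ℝ E).prod (fderiv ℝ ψ x))) x :=
    hφ.hasFDerivAt.comp x ((hasFDerivAt_id x).prodMk hψ.hasFDerivAt)
  rw [hcomp.fderiv]
  rfl

theorem ContinuousLinearMap.apply_prod_eq_add_sum_single {ι : Type*} [Fintype ι] [DecidableEq ι]
    (L : E × (ι → ℝ) →L[ℝ] G) (v : E) (w : ι → ℝ) :
    L (v, w) = L (v, 0) + ∑ j, w j • L (0, Pi.single j 1) := by
  have hvw : (v, w) = (v, 0) + ∑ j, w j • ((0 : E), (Pi.single j 1 : ι → ℝ)) := by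
    ext <;> simp [Prod.fst_sum, Prod.snd_sum, Pi.single_apply]
  rw [hvw, map_add, map_sum]
  simp only [map_smul]

theorem integral_fderiv_apply_eq_zero [CompleteSpace G] [FiniteDimensional ℝ E] [MeasurableSpace E]
    [BorelSpace E] (μ : Measure E) [μ.IsAddHaarMeasure] {f : E → G} (hf : ContDiff ℝ 1 f)
    (hfc : HasCompactSupport f) (v : E) :
    ∫ x, fderiv ℝ f x v ∂μ = 0 := by
  have hf' : Integrable (fun x => fderiv ℝ f x v) μ :=
    ((hf.continuous_fderiv one_ne_zero).clm_apply continuous_const).integrable_of_hasCompactSupport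
      (hfc.fderiv_apply ℝ v)
  simpa using integral_bilinear_fderiv_right_eq_neg_left_of_integrable (μ := μ) (v := v)
    (f := fun _ => (1 : ℝ)) (g := f) (B := ContinuousLinearMap.lsmul ℝ ℝ) (by simp)
    (by simpa using hf') (by simpa using hf.continuous.integrable_of_hasCompactSupport hfc)
    (fun _ _ => differentiableAt_const _) (fun x _ => hf.differentiable one_ne_zero x)

end Calculus

section Divergence

variable {ι : Type*} [Fintype ι] [DecidableEq ι]

noncomputable def divergence (F : (ι → ℝ) → ι → ℝ) (x : ι → ℝ) : ℝ :=
  ∑ i, fderiv ℝ F x (Pi.single i 1) i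

theorem divergence_eq_zero_of_notMem_tsupport {F : (ι → ℝ) → ι → ℝ} {x : ι → ℝ}
    (hx : x ∉ tsupport F) : divergence F x = 0 := by
  simp [divergence, fderiv_of_notMem_tsupport ℝ hx]

theorem integral_divergence_eq_zero (μ : Measure (ι → ℝ)) [μ.IsAddHaarMeasure]
    {F : (ι → ℝ) → ι → ℝ} (hF : ContDiff ℝ 1 F) (hFc : HasCompactSupport F) :
    ∫ x, divergence F x ∂μ = 0 := by
  have hint : ∀ v, Integrable (fun x => fderiv ℝ F x v) μ :=
    fun v => ((hF.continuous_fderiv one_ne_zero).clm_apply continuous_const)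
      |>.integrable_of_hasCompactSupport (hFc.fderiv_apply ℝ v)
  unfold divergence
  rw [integral_finsetSum _ fun i _ => (hint _).eval i]
  refine Finset.sum_eq_zero fun i _ => ?_
  rw [← eval_integral (hint _).eval, integral_fderiv_apply_eq_zero μ hF hFc, Pi.zero_apply]

end Divergence

theorem gce_integrand_eq_divergence {p q : ℕ}
    {φ : (Fin (p + 1) → ℝ) × (Fin q → ℝ) → Fin (p + 1) → ℝ}
    {ψ : (Fin (p + 1) → ℝ) → Fin q → ℝ} {ξ : Fin (p + 1) → ℝ}
    (hφ : DifferentiableAt ℝ φ (ξ, ψ ξ)) (hψ : DifferentiableAt ℝ ψ ξ) :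
    (∑ i : Fin (p + 1), fderiv ℝ φ (ξ, ψ ξ) (Pi.single i 1, 0) i)
        + ∑ i : Fin (p + 1), ∑ j : Fin q,
            fderiv ℝ φ (ξ, ψ ξ) (0, Pi.single j 1) i * jac p q ψ ξ j i
      = divergence (fun x => φ (x, ψ x)) ξ := by
  rw [divergence, ← Finset.sum_add_distrib]
  refine Finset.sum_congr rfl fun i _ => ?_
  rw [fderiv_comp_graph_apply hφ hψ,
    (fderiv ℝ φ (ξ, ψ ξ)).apply_prod_eq_add_sum_single _ (fderiv ℝ ψ ξ _)]
  simp only [jac, Pi.add_apply, Finset.sum_apply, Pi.smul_apply, smul_eq_mul, mul_comm]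

theorem setIntegral_gce_integrand_eq_zero {p q : ℕ} {Ξ : Set (Fin (p + 1) → ℝ)} (hΞ : IsOpen Ξ)
    {ψ : (Fin (p + 1) → ℝ) → Fin q → ℝ} (hψ : ContDiffOn ℝ 1 ψ Ξ)
    {φ : (Fin (p + 1) → ℝ) × (Fin q → ℝ) → Fin (p + 1) → ℝ} (hφ : ContDiff ℝ 1 φ)
    (hφc : HasCompactSupport φ) (hφΞ : tsupport φ ⊆ Ξ ×ˢ univ) :
    ∫ ξ in Ξ,
        ((∑ i : Fin (p + 1), fderiv ℝ φ (ξ, ψ ξ) (Pi.single i 1, 0) i)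
          + ∑ i : Fin (p + 1), ∑ j : Fin q,
              fderiv ℝ φ (ξ, ψ ξ) (0, Pi.single j 1) i * jac p q ψ ξ j i) = 0 := by
  set F : (Fin (p + 1) → ℝ) → Fin (p + 1) → ℝ := fun ξ => φ (ξ, ψ ξ)
  have hFΞ : tsupport F ⊆ Ξ := (hφc.tsupport_comp_graph_subset ψ).trans <| by
    rintro _ ⟨z, hz, rfl⟩
    exact (hφΞ hz).1
  have hF : ContDiff ℝ 1 F :=
    (hφ.comp_contDiffOn (contDiffOn_id.prodMk hψ)).contDiff_of_tsupport_subset hΞ hFΞ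
  calc _ = ∫ ξ in Ξ, divergence F ξ :=
        setIntegral_congr_fun hΞ.measurableSet fun ξ hξ =>
          gce_integrand_eq_divergence (hφ.differentiable one_ne_zero _)
            ((hψ.differentiableOn one_ne_zero).differentiableAt (hΞ.mem_nhds hξ))
    _ = ∫ ξ, divergence F ξ := setIntegral_eq_integral_of_forall_compl_eq_zero
        fun ξ hξ => divergence_eq_zero_of_notMem_tsupport fun h => hξ (hFΞ h)
    _ = 0 := integral_divergence_eq_zero volume hF (hφc.comp_graph ψ)

theorem superposition_solves_gce_general (p q : ℕ)
    (Ξ : Set (Fin (p + 1) → ℝ)) (hΞo : IsOpen Ξ)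
    {S : Type*} [MeasurableSpace S] (P : Measure S)
    (ψ : S → (Fin (p + 1) → ℝ) → Fin q → ℝ)
    (hψC1 : ∀ᵐ ω ∂P, ContDiffOn ℝ 1 (ψ ω) Ξ) :
    ∀ φ : (Fin (p + 1) → ℝ) × (Fin q → ℝ) → Fin (p + 1) → ℝ,
      ContDiff ℝ (⊤ : ℕ∞) φ → HasCompactSupport φ →
      tsupport φ ⊆ Ξ ×ˢ univ →
      ∫ ω, (∫ ξ in Ξ,
        ((∑ i : Fin (p + 1), fderiv ℝ φ (ξ, ψ ω ξ) (Pi.single i 1, 0) i)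
          + ∑ i : Fin (p + 1), ∑ j : Fin q,
              fderiv ℝ φ (ξ, ψ ω ξ) (0, Pi.single j 1) i
                * jac p q (ψ ω) ξ j i)) ∂P = 0 := by
  intro φ hφ hφc hφΞ
  refine integral_eq_zero_of_ae ?_
  filter_upwards [hψC1] with ω hω
  exact setIntegral_gce_integrand_eq_zero hΞo hω (hφ.of_le (by exact_mod_cast le_top)) hφc hφΞ

/-- **Superposition solves the GCE.** Let `ψ` be a jointly measurable
random field on a bounded open `Ξ ⊆ ℝ^{p+1}`, a.s. continuously differentiable in `ξ`,
with `∫_S ∫_Ξ ‖∇_ξψ(ω,ξ)‖² dξ dP(ω) < ∞`. Then for every test function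
`φ ∈ C_c^∞(Ξ × ℝ^q; ℝ^{p+1})`:
`∫_S ∫_Ξ ( div_ξ φ(ξ, ψ(ω,ξ)) + ⟨∇_x φ(ξ, ψ(ω,ξ)), ∇_ξψ(ω,ξ)⟩_F ) dξ dP(ω) = 0`,
i.e. the mixture of the delta-valued solutions `δ_{ψ(ω,ξ)}` is a distributional solution
of the generalized continuity equation. -/
theorem superposition_solves_gce (p q : ℕ)
    (Ξ : Set (Fin (p + 1) → ℝ)) (hΞo : IsOpen Ξ) (hΞb : Bornology.IsBounded Ξ)
    {S : Type*} [MeasurableSpace S] (P : Measure S) [IsProbabilityMeasure P]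
    (ψ : S → (Fin (p + 1) → ℝ) → Fin q → ℝ)
    (hψmeas : Measurable fun z : S × (Fin (p + 1) → ℝ) => ψ z.1 z.2)
    (hψC1 : ∀ᵐ ω ∂P, ContDiffOn ℝ 1 (ψ ω) Ξ)
    -- finite energy: ∫_S ∫_Ξ ‖∇_ξψ(ω,ξ)‖² dξ dP(ω) < ∞
    (henergy : (∫⁻ ω, ∫⁻ ξ in Ξ,
      ENNReal.ofReal (∑ j : Fin q, ∑ i : Fin (p + 1), (jac p q (ψ ω) ξ j i) ^ 2)
        ∂volume ∂P) < ⊤) :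
    ∀ φ : (Fin (p + 1) → ℝ) × (Fin q → ℝ) → Fin (p + 1) → ℝ,
      ContDiff ℝ (⊤ : ℕ∞) φ → HasCompactSupport φ →
      tsupport φ ⊆ Ξ ×ˢ univ →
      ∫ ω, (∫ ξ in Ξ,
        ((∑ i : Fin (p + 1), fderiv ℝ φ (ξ, ψ ω ξ) (Pi.single i 1, 0) i)
          + ∑ i : Fin (p + 1), ∑ j : Fin q,
              fderiv ℝ φ (ξ, ψ ω ξ) (0, Pi.single j 1) i
                * jac p q (ψ ω) ξ j i)) ∂P = 0 :=
  superposition_solves_gce_general p q Ξ hΞo P ψ hψC1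
end
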